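/- Let $A_1, A_2$ be integer points with $\gcd$-one coordinates on the diagonal cubic surface $a x^3 + b y^3 + c z^3 + d u^3 = 0$ with nonzero integers $a,b,c,d$, $K = \max\{|a|,|b|,|c|,|d|\}$, and define $h_{sum}(P) = |x|+|y|+|z|+|u|$. Then the composition point $(\alpha x_1 - \beta x_2, \alpha y_1 - \beta y_2, \alpha z_1 - \beta z_2, \alpha u_1 - \beta u_2)$ (with $\alpha, \beta$ as in the secant formula) satisfies $h_{sum}(A_1 \circ A_2) \le 2 K \cdot h_{sum}(A_1)^2 \cdot h_{sum}(A_2)^2 \cdot \max\{h_{sum}(A_1), h_{sum}(A_2)\}$. -/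

import Mathlib

/-!
The composition point is the combination `α • A₁ - β • A₂`, so by the triangle inequality its
height is at most `|α| h(A₁) + |β| h(A₂)`. Each of `α`, `β` is a sum of monomials `w_i p_i q_i²`,
whose absolute value is bounded by `K h(A₁) h(A₂)²` (resp. `K h(A₁)² h(A₂)`); this gives the bound
`2 K h(A₁)² h(A₂)²`. The extra factor `max h(A₁) h(A₂)` is harmless: an integer height is either
`0`, making both sides vanish, or at least `1`.
-/

open Finset

section DiagonalForm

variable {R ι : Type*} [CommRing R] [LinearOrder R] [IsStrictOrderedRing R] [Fintype ι]

def hsum (p : ι → R) : R := ∑ i, |p i|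

/-- For the form `∑ wᵢ Xᵢ³`, the paper's `α` is `secantCoeff w p q` and its `β` is
`secantCoeff w q p`. -/
def secantCoeff (w p q : ι → R) : R := ∑ i, w i * p i * q i ^ 2

def secantComp (w p q : ι → R) : ι → R :=
  fun i => secantCoeff w p q * p i - secantCoeff w q p * q i

lemma hsum_nonneg (p : ι → R) : 0 ≤ hsum p :=
  sum_nonneg fun i _ => abs_nonneg (p i)

lemma abs_le_hsum (p : ι → R) (i : ι) : |p i| ≤ hsum p :=
  single_le_sum (f := fun j => |p j|) (fun j _ => abs_nonneg (p j)) (mem_univ i)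

lemma abs_secantCoeff_le {w : ι → R} {K : R} (hK : ∀ i, |w i| ≤ K) (p q : ι → R) :
    |secantCoeff w p q| ≤ K * hsum p * hsum q ^ 2 := by
  calc |secantCoeff w p q| ≤ ∑ i, |w i * p i * q i ^ 2| := abs_sum_le_sum_abs _ _
    _ = ∑ i, |w i| * (|p i| * |q i| ^ 2) := by simp only [abs_mul, abs_pow, mul_assoc]
    _ ≤ ∑ i, K * (|p i| * hsum q ^ 2) := by
        gcongr with i
        · exact (abs_nonneg _).trans (hK i)
        · exact hK i
        · exact abs_le_hsum q i
    _ = K * hsum p * hsum q ^ 2 := by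
        rw [← mul_sum, ← sum_mul, mul_assoc]; rfl

lemma hsum_secantComp_le {w : ι → R} {K : R} (hK : ∀ i, |w i| ≤ K) (p q : ι → R) :
    hsum (secantComp w p q) ≤ 2 * K * hsum p ^ 2 * hsum q ^ 2 := by
  set α := secantCoeff w p q
  set β := secantCoeff w q p
  have hα : |α| * hsum p ≤ K * hsum p ^ 2 * hsum q ^ 2 := by
    nlinarith [abs_secantCoeff_le hK p q, hsum_nonneg p]
  have hβ : |β| * hsum q ≤ K * hsum p ^ 2 * hsum q ^ 2 := by
    nlinarith [abs_secantCoeff_le hK q p, hsum_nonneg q]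
  calc hsum (secantComp w p q) = ∑ i, |α * p i - β * q i| := rfl
    _ ≤ ∑ i, (|α| * |p i| + |β| * |q i|) := by
        gcongr with i
        simpa only [abs_mul] using abs_sub (α * p i) (β * q i)
    _ = |α| * hsum p + |β| * hsum q := by
        rw [sum_add_distrib, ← mul_sum, ← mul_sum, hsum, hsum]
    _ ≤ 2 * K * hsum p ^ 2 * hsum q ^ 2 := by linarith

end DiagonalForm

lemma Int.mul_sq_mul_sq_le_mul_max {c m n : ℤ} (hc : 0 ≤ c) (hm : 0 ≤ m) :
    c * m ^ 2 * n ^ 2 ≤ c * m ^ 2 * n ^ 2 * max m n := by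
  rcases hm.eq_or_lt with rfl | hm
  · simp
  · exact le_mul_of_one_le_right (by positivity) (le_max_of_le_left hm)

theorem secant_composition_hsum_bound_general
    (a b c d x1 y1 z1 u1 x2 y2 z2 u2 : ℤ) :
    let K := max (max |a| |b|) (max |c| |d|)
    let H1 := |x1| + |y1| + |z1| + |u1|
    let H2 := |x2| + |y2| + |z2| + |u2|
    let α := a * x1 * x2^2 + b * y1 * y2^2 + c * z1 * z2^2 + d * u1 * u2^2
    let β := a * x1^2 * x2 + b * y1^2 * y2 + c * z1^2 * z2 + d * u1^2 * u2
    |α * x1 - β * x2| + |α * y1 - β * y2| + |α * z1 - β * z2| + |α * u1 - β * u2|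
      ≤ 2 * K * H1^2 * H2^2 * max H1 H2 := by
  intro K H1 H2 α β
  have hK : ∀ i, |![a, b, c, d] i| ≤ K := by
    intro i; fin_cases i <;> simp [K]
  have hbound := hsum_secantComp_le hK ![x1, y1, z1, u1] ![x2, y2, z2, u2]
  simp only [hsum, secantComp, secantCoeff, Fin.sum_univ_four, Matrix.cons_val] at hbound
  refine le_trans (le_of_eq (by simp only [α, β]; ring_nf)) (hbound.trans ?_)
  exact Int.mul_sq_mul_sq_le_mul_max (by positivity) (by positivity)

theorem secant_composition_hsum_bound
    (a b c d x1 y1 z1 u1 x2 y2 z2 u2 : ℤ)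
    (ha : a ≠ 0) (hb : b ≠ 0) (hc : c ≠ 0) (hd : d ≠ 0)
    (hg1 : Int.gcd (Int.gcd (Int.gcd x1 y1) z1) u1 = 1)
    (hg2 : Int.gcd (Int.gcd (Int.gcd x2 y2) z2) u2 = 1)
    (h1 : a * x1^3 + b * y1^3 + c * z1^3 + d * u1^3 = 0)
    (h2 : a * x2^3 + b * y2^3 + c * z2^3 + d * u2^3 = 0) :
    let K := max (max |a| |b|) (max |c| |d|)
    let H1 := |x1| + |y1| + |z1| + |u1|
    let H2 := |x2| + |y2| + |z2| + |u2|
    let α := a * x1 * x2^2 + b * y1 * y2^2 + c * z1 * z2^2 + d * u1 * u2^2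
    let β := a * x1^2 * x2 + b * y1^2 * y2 + c * z1^2 * z2 + d * u1^2 * u2
    |α * x1 - β * x2| + |α * y1 - β * y2| + |α * z1 - β * z2| + |α * u1 - β * u2|
      ≤ 2 * K * H1^2 * H2^2 * max H1 H2 :=
  secant_composition_hsum_bound_general a b c d x1 y1 z1 u1 x2 y2 z2 u2
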